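/- The Hopf map π is surjective from ℂ² onto ℝ × ℂ, and its fibers over nonzero points are exactly the orbits of the circle action θ·(z₁,z₂) = (e^{√−1 θ}z₁, e^{−√−1 θ}z₂): for every z = (z₁,z₂) ∈ ℂ² with z ≠ (0,0) and every w = (w₁,w₂) ∈ ℂ², one has π(w) = π(z) if and only if there exists θ ∈ ℝ with w₁ = e^{√−1 θ}z₁ and w₂ = e^{−√−1 θ}z₂. -/

import Mathlib

/-- The Hopf map `π(z₁,z₂) = (|z₁|² - |z₂|², 2 z₁ z₂) : ℂ² → ℝ × ℂ`. -/
noncomputable def hopfMap : ℂ × ℂ → ℝ × ℂ :=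
  fun z => (‖z.1‖ ^ 2 - ‖z.2‖ ^ 2, 2 * z.1 * z.2)

/-! Since `(|z₁|² + |z₂|²)² = (|z₁|² - |z₂|²)² + |2 z₁ z₂|²`, a fibre of the Hopf map fixes
`|z₁|`, `|z₂|` and `z₁ z₂`. If `z₁ ≠ 0`, the ratio `w₁ / z₁` is then a unit complex number `e^{iθ}`,
and `w₁ w₂ = z₁ z₂` forces `w₂ = e^{-iθ} z₂`; the case `z₂ ≠ 0` is symmetric. -/

open Complex

/- With `r = √(t² + |c|²)`, the point `(√((r + t)/2), c / (2√((r + t)/2)))` lies over `(t, c)`,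
because `|c|² = r² - t²`; when `r + t = 0` we have `c = 0` and `(0, √(-t))` does. -/
theorem hopfMap_surjective : Function.Surjective hopfMap := by
  rintro ⟨t, c⟩
  set r := √(t ^ 2 + ‖c‖ ^ 2)
  have hr_sq : r ^ 2 = t ^ 2 + ‖c‖ ^ 2 := Real.sq_sqrt (by positivity)
  have ht_le : |t| ≤ r := Real.abs_le_sqrt (by nlinarith [sq_nonneg ‖c‖])
  obtain ⟨hrt_nonneg, -⟩ := abs_le.mp ht_le
  rcases (show 0 ≤ r + t by linarith).eq_or_lt with hrt | hrt
  · have hr : r = -t := by linarith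
    have hc : c = 0 := by
      rw [hr] at hr_sq
      exact norm_eq_zero.mp (pow_eq_zero_iff two_ne_zero |>.mp (by linarith))
    have ht : 0 ≤ -t := hr ▸ Real.sqrt_nonneg _
    refine ⟨(0, (√(-t) : ℂ)), ?_⟩
    simp [hopfMap, hc, Real.sq_sqrt ht]
  · set a := √((r + t) / 2)
    have ha_pos : 0 < a := Real.sqrt_pos.mpr (by linarith)
    have ha_sq : a ^ 2 = (r + t) / 2 := Real.sq_sqrt (by linarith)
    have ha_ne : (a : ℂ) ≠ 0 := ofReal_ne_zero.mpr ha_pos.ne'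
    refine ⟨(a, c / (2 * a)), Prod.ext ?_ ?_⟩
    · simp only [hopfMap, norm_div, norm_mul, norm_real, Real.norm_eq_abs, Complex.norm_two,
        abs_of_pos ha_pos, div_pow, mul_pow]
      field_simp
      linear_combination (4 * a ^ 2 + 2 * r - 2 * t) * ha_sq + hr_sq
    · simp only [hopfMap]
      field_simp

theorem eq_and_eq_of_sq_sub_sq_eq_of_mul_eq {a b c d : ℝ} (ha : 0 ≤ a) (hb : 0 ≤ b)
    (hc : 0 ≤ c) (hd : 0 ≤ d) (hsub : a ^ 2 - b ^ 2 = c ^ 2 - d ^ 2) (hmul : a * b = c * d) :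
    a = c ∧ b = d := by
  have hsum_sq : (a ^ 2 + b ^ 2) ^ 2 = (c ^ 2 + d ^ 2) ^ 2 := by
    linear_combination (a ^ 2 - b ^ 2 + c ^ 2 - d ^ 2) * hsub + 4 * (a * b + c * d) * hmul
  have hsum : a ^ 2 + b ^ 2 = c ^ 2 + d ^ 2 :=
    (pow_left_inj₀ (by positivity) (by positivity) two_ne_zero).mp hsum_sq
  constructor
  · exact (pow_left_inj₀ ha hc two_ne_zero).mp (by linarith)
  · exact (pow_left_inj₀ hb hd two_ne_zero).mp (by linarith)

theorem norm_eq_and_mul_eq_of_hopfMap_eq {w z : ℂ × ℂ} (h : hopfMap w = hopfMap z) :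
    ‖w.1‖ = ‖z.1‖ ∧ ‖w.2‖ = ‖z.2‖ ∧ w.1 * w.2 = z.1 * z.2 := by
  simp only [hopfMap, Prod.mk.injEq] at h
  obtain ⟨hsub, hmul⟩ := h
  have hmul : w.1 * w.2 = z.1 * z.2 := by linear_combination hmul / 2
  have hnorm_mul : ‖w.1‖ * ‖w.2‖ = ‖z.1‖ * ‖z.2‖ := by rw [← norm_mul, ← norm_mul, hmul]
  obtain ⟨h1, h2⟩ := eq_and_eq_of_sq_sub_sq_eq_of_mul_eq (norm_nonneg _) (norm_nonneg _)
    (norm_nonneg _) (norm_nonneg _) hsub hnorm_mul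
  exact ⟨h1, h2, hmul⟩

theorem exists_exp_mul_of_norm_eq_of_mul_eq {a b c d : ℂ} (hc : c ≠ 0) (hac : ‖a‖ = ‖c‖)
    (hmul : a * b = c * d) :
    ∃ θ : ℝ, a = exp (I * θ) * c ∧ b = exp (-(I * θ)) * d := by
  obtain ⟨θ, hθ⟩ := (norm_eq_one_iff (a / c)).mp (by rw [norm_div, hac, div_self (by simpa)])
  have ha : a = exp (I * θ) * c := by rw [mul_comm I, hθ, div_mul_cancel₀ a hc]
  refine ⟨θ, ha, ?_⟩
  have hb : exp (I * θ) * b = d := mul_left_cancel₀ hc (by rw [← hmul, ha]; ring)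
  rw [exp_neg, ← hb, inv_mul_cancel_left₀ (exp_ne_zero _)]

theorem hopfMap_exp_mul (θ : ℝ) (z : ℂ × ℂ) :
    hopfMap (exp (I * θ) * z.1, exp (-(I * θ)) * z.2) = hopfMap z := by
  have hexp : exp (I * θ) * exp (-(I * θ)) = 1 := by rw [← exp_add, add_neg_cancel, exp_zero]
  have hnorm : ‖exp (-(I * θ))‖ = 1 := by simpa using norm_exp_I_mul_ofReal (-θ)
  simp only [hopfMap, norm_mul, norm_exp_I_mul_ofReal, hnorm, one_mul, Prod.mk.injEq, true_and]
  linear_combination 2 * z.1 * z.2 * hexp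

/-- The Hopf map is surjective onto `ℝ × ℂ`, and its fibers over nonzero points are
exactly the orbits of the circle action `θ · (z₁, z₂) = (e^{iθ} z₁, e^{-iθ} z₂)`. -/
theorem stmt_13 :
    Function.Surjective hopfMap ∧
    ∀ z : ℂ × ℂ, z ≠ 0 → ∀ w : ℂ × ℂ,
      (hopfMap w = hopfMap z ↔
        ∃ θ : ℝ, w.1 = Complex.exp (Complex.I * (θ:ℂ)) * z.1 ∧
          w.2 = Complex.exp (-(Complex.I * (θ:ℂ))) * z.2) := by
  refine ⟨hopfMap_surjective, fun z hz w => ⟨fun h => ?_, ?_⟩⟩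
  · obtain ⟨h1, h2, hmul⟩ := norm_eq_and_mul_eq_of_hopfMap_eq h
    by_cases hz1 : z.1 = 0
    · have hz2 : z.2 ≠ 0 := fun hz2 => hz (Prod.ext hz1 hz2)
      obtain ⟨θ, hw2, hw1⟩ := exists_exp_mul_of_norm_eq_of_mul_eq hz2 h2 (by
        rw [mul_comm, hmul, mul_comm])
      exact ⟨-θ, by simpa using hw1, by simpa using hw2⟩
    · exact exists_exp_mul_of_norm_eq_of_mul_eq hz1 h1 hmul
  · rintro ⟨θ, hw1, hw2⟩
    rw [← hopfMap_exp_mul θ z, ← hw1, ← hw2]
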